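/- The uniform error of the constrained mock-Chebyshev least-squares approximant satisfies E_{P̂_X}(f) = ‖f − P̂_X‖_∞ ≤ (1 + ‖Q̂‖) · E_p(f̂) · ‖ω_m‖_∞, where ‖Q̂‖ is the uniform-norm operator norm of the weighted least-squares projection Q̂ and ‖ω_m‖_∞ = sup_{t∈[−1,1]} |ω_m(t)|. -/
import Mathlib


/-- The uniform norm on `[−1, 1]`. -/
noncomputable def unifNorm (φ : ℝ → ℝ) : ℝ :=
  sSup ((fun t => |φ t|) '' Set.Icc (-1 : ℝ) 1)

/-- `E_p(φ) = inf_{Q ∈ 𝒫^p} ‖φ − Q‖_∞`, the best uniform approximation error by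
polynomials of degree `≤ p`. -/
noncomputable def Ep (p : ℕ) (φ : ℝ → ℝ) : ℝ :=
  sInf {e : ℝ | ∃ Q : Polynomial ℝ, Q.degree ≤ (p : ℕ) ∧
    e = unifNorm fun t => φ t - Q.eval t}

/-- The operator norm, induced by the uniform norm on `[−1, 1]`, of an operator
sending continuous functions to polynomials. -/
noncomputable def opNorm (T : (ℝ → ℝ) → Polynomial ℝ) : ℝ :=
  sSup {a : ℝ | ∃ φ : ℝ → ℝ, ContinuousOn φ (Set.Icc (-1 : ℝ) 1) ∧
    unifNorm φ = 1 ∧ a = unifNorm fun t => (T φ).eval t}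

section Aux

lemma unifNorm_nonneg' (φ : ℝ → ℝ) : 0 ≤ unifNorm φ :=
  Real.sSup_nonneg (by rintro a ⟨t, ht, rfl⟩; exact abs_nonneg _)

lemma bddAbove_abs_image {φ : ℝ → ℝ} (hφ : ContinuousOn φ (Set.Icc (-1:ℝ) 1)) :
    BddAbove ((fun t => |φ t|) '' Set.Icc (-1:ℝ) 1) :=
  (isCompact_Icc.image_of_continuousOn hφ.abs).bddAbove

lemma le_unifNorm {φ : ℝ → ℝ} (hφ : ContinuousOn φ (Set.Icc (-1:ℝ) 1))
    {t : ℝ} (ht : t ∈ Set.Icc (-1:ℝ) 1) : |φ t| ≤ unifNorm φ :=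
  le_csSup (bddAbove_abs_image hφ) ⟨t, ht, rfl⟩

lemma unifNorm_le {φ : ℝ → ℝ} {M : ℝ} (hM : 0 ≤ M)
    (h : ∀ t ∈ Set.Icc (-1:ℝ) 1, |φ t| ≤ M) : unifNorm φ ≤ M :=
  Real.sSup_le (by rintro a ⟨t, ht, rfl⟩; exact h t ht) hM

lemma unifNorm_const_mul {φ : ℝ → ℝ} (hφ : ContinuousOn φ (Set.Icc (-1:ℝ) 1)) (a : ℝ) :
    unifNorm (fun t => a * φ t) = |a| * unifNorm φ := by
  rcases eq_or_ne a 0 with rfl | ha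
  · simp only [zero_mul, abs_zero]
    exact le_antisymm (unifNorm_le le_rfl (by intro t ht; simp)) (unifNorm_nonneg' _)
  · refine le_antisymm (unifNorm_le (mul_nonneg (abs_nonneg a) (unifNorm_nonneg' φ)) ?_) ?_
    · intro t ht
      rw [abs_mul]
      exact mul_le_mul_of_nonneg_left (le_unifNorm hφ ht) (abs_nonneg a)
    · have h2 : unifNorm φ ≤ |a|⁻¹ * unifNorm (fun t => a * φ t) := by
        refine unifNorm_le (mul_nonneg (inv_nonneg.2 (abs_nonneg a)) (unifNorm_nonneg' _)) ?_
        intro t ht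
        have hle := le_unifNorm (φ := fun t => a * φ t) (continuousOn_const.mul hφ) ht
        have : |φ t| = |a|⁻¹ * |a * φ t| := by
          rw [abs_mul, ← mul_assoc, inv_mul_cancel₀ (abs_ne_zero.2 ha), one_mul]
        rw [this]
        exact mul_le_mul_of_nonneg_left hle (inv_nonneg.2 (abs_nonneg a))
      calc |a| * unifNorm φ ≤ |a| * (|a|⁻¹ * unifNorm (fun t => a * φ t)) :=
            mul_le_mul_of_nonneg_left h2 (abs_nonneg a)
        _ = unifNorm (fun t => a * φ t) := by
            rw [← mul_assoc, mul_inv_cancel₀ (abs_ne_zero.2 ha), one_mul]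

lemma poly_eq_of_eval_eq {N p : ℕ} (hpN : p + 1 ≤ N)
    (x : Fin N → ℝ) (hx : Function.Injective x) {A B : Polynomial ℝ}
    (hA : A.degree ≤ (p:ℕ)) (hB : B.degree ≤ (p:ℕ))
    (h : ∀ k, A.eval (x k) = B.eval (x k)) : A = B := by
  have hd : (A - B).degree ≤ (p:ℕ) := le_trans (Polynomial.degree_sub_le _ _) (max_le hA hB)
  have h0 : A - B = 0 := by
    refine Polynomial.eq_zero_of_natDegree_lt_card_of_eval_eq_zero _ hx
      (fun k => by simp [h k]) ?_
    have h1 : (A - B).natDegree ≤ p := Polynomial.natDegree_le_iff_degree_le.2 hd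
    rw [Fintype.card_fin]
    omega
  exact sub_eq_zero.mp h0

lemma minimizer_unique {N p : ℕ} (hpN : p + 1 ≤ N)
    (x : Fin N → ℝ) (hx : Function.Injective x)
    (w : Fin N → ℝ) (hw : ∀ k, 0 < w k)
    (ψ : Fin N → ℝ) {A B : Polynomial ℝ}
    (hA : A.degree ≤ (p:ℕ)) (hB : B.degree ≤ (p:ℕ))
    (hAmin : ∀ Q : Polynomial ℝ, Q.degree ≤ (p:ℕ) →
      ∑ k, w k * (ψ k - A.eval (x k))^2 ≤ ∑ k, w k * (ψ k - Q.eval (x k))^2)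
    (hBmin : ∀ Q : Polynomial ℝ, Q.degree ≤ (p:ℕ) →
      ∑ k, w k * (ψ k - B.eval (x k))^2 ≤ ∑ k, w k * (ψ k - Q.eval (x k))^2) :
    A = B := by
  set M : Polynomial ℝ := (2⁻¹ : ℝ) • (A + B) with hMdef
  have hMdeg : M.degree ≤ (p:ℕ) :=
    le_trans (Polynomial.degree_smul_le _ _)
      (le_trans (Polynomial.degree_add_le _ _) (max_le hA hB))
  have h1 := hAmin M hMdeg
  have h2 := hBmin M hMdeg
  have hsum : ∑ k, w k * (ψ k - M.eval (x k))^2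
      = (∑ k, w k * (ψ k - A.eval (x k))^2) / 2 + (∑ k, w k * (ψ k - B.eval (x k))^2) / 2
          - (∑ k, w k * (A.eval (x k) - B.eval (x k))^2) / 4 := by
    rw [Finset.sum_div, Finset.sum_div, Finset.sum_div, ← Finset.sum_add_distrib,
      ← Finset.sum_sub_distrib]
    refine Finset.sum_congr rfl fun k _ => ?_
    have hMe : M.eval (x k) = 2⁻¹ * (A.eval (x k) + B.eval (x k)) := by
      rw [hMdef]
      simp only [Polynomial.eval_smul, Polynomial.eval_add, smul_eq_mul]
    rw [hMe]; ring
  have hkey : ∑ k, w k * (A.eval (x k) - B.eval (x k))^2 ≤ 0 := by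
    rw [hsum] at h1 h2
    linarith
  have hnn : ∀ k ∈ Finset.univ, 0 ≤ w k * (A.eval (x k) - B.eval (x k))^2 :=
    fun k _ => mul_nonneg (hw k).le (sq_nonneg _)
  have hterm := (Finset.sum_eq_zero_iff_of_nonneg hnn).1
    (le_antisymm hkey (Finset.sum_nonneg hnn))
  refine poly_eq_of_eval_eq hpN x hx hA hB fun k => ?_
  have hk := hterm k (Finset.mem_univ k)
  rcases mul_eq_zero.1 hk with h | h
  · exact absurd h (hw k).ne'
  · exact sub_eq_zero.mp (sq_eq_zero_iff.mp h)

end Aux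

/-- the uniform error of the constrained mock-Chebyshev
least-squares approximant `P̂_X = P_{X'} + Q̂(f̂)·ω_m` satisfies
`‖f − P̂_X‖_∞ ≤ (1 + ‖Q̂‖) · E_p(f̂) · ‖ω_m‖_∞`. -/
theorem constrained_mock_chebyshev_uniform_error_bound
    (m n r : ℕ) (hmr : m < r) (hrn : r ≤ n) (p : ℕ) (hp : p = r - m - 1)
    (hnm : p + 1 ≤ n - m)
    (x' : Fin (m + 1) → ℝ) (x'' : Fin (n - m) → ℝ)
    (hx'mono : StrictMono x') (hx''mono : StrictMono x'')
    (hx'mem : ∀ i, x' i ∈ Set.Icc (-1 : ℝ) 1)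
    (hx''mem : ∀ k, x'' k ∈ Set.Icc (-1 : ℝ) 1)
    (hdisj : ∀ i k, x' i ≠ x'' k)
    (f : ℝ → ℝ) (hf : ContDiffOn ℝ (m + 1) f (Set.Icc (-1 : ℝ) 1))
    (PX' : Polynomial ℝ) (hPX'deg : PX'.degree ≤ (m : ℕ))
    (hPX'interp : ∀ i, PX'.eval (x' i) = f (x' i))
    (ω : Polynomial ℝ)
    (hω : ω = ∏ i : Fin (m + 1), (Polynomial.X - Polynomial.C (x' i)))
    -- `f̂` is the continuous extension of `(f − P_{X'})/ω_m` to `[−1, 1]`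
    (fhat : ℝ → ℝ) (hfhatcont : ContinuousOn fhat (Set.Icc (-1 : ℝ) 1))
    (hfhat : ∀ t ∈ Set.Icc (-1 : ℝ) 1, fhat t * ω.eval t = f t - PX'.eval t)
    -- `Q̂` is the least-squares projection onto `𝒫^p` w.r.t. the weighted
    -- discrete 2-norm with weights `ω_m(x''_k)²`
    (Qhat : (ℝ → ℝ) → Polynomial ℝ)
    (hQhat : ∀ φ : ℝ → ℝ, ContinuousOn φ (Set.Icc (-1 : ℝ) 1) →
      (Qhat φ).degree ≤ (p : ℕ) ∧ ∀ Q : Polynomial ℝ, Q.degree ≤ (p : ℕ) →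
        ∑ k : Fin (n - m), (ω.eval (x'' k)) ^ 2 * (φ (x'' k) - (Qhat φ).eval (x'' k)) ^ 2 ≤
          ∑ k : Fin (n - m), (ω.eval (x'' k)) ^ 2 * (φ (x'' k) - Q.eval (x'' k)) ^ 2) :
    unifNorm (fun t => f t - (PX' + Qhat fhat * ω).eval t) ≤
      (1 + opNorm Qhat) * Ep p fhat * unifNorm (fun t => ω.eval t) := by
  classical
  have hx''inj : Function.Injective x'' := hx''mono.injective
  have hωcont : ContinuousOn (fun t => ω.eval t) (Set.Icc (-1:ℝ) 1) := ω.continuousOn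
  -- weights are positive
  have hωne : ∀ k, ω.eval (x'' k) ≠ 0 := by
    intro k
    rw [hω, Polynomial.eval_prod]
    refine Finset.prod_ne_zero_iff.2 fun i _ => ?_
    simp only [Polynomial.eval_sub, Polynomial.eval_X, Polynomial.eval_C]
    exact sub_ne_zero.2 fun h => hdisj i k h.symm
  have hw : ∀ k, 0 < (ω.eval (x'' k)) ^ 2 :=
    fun k => lt_of_le_of_ne (sq_nonneg _) (Ne.symm (pow_ne_zero 2 (hωne k)))
  set N := opNorm Qhat with hNdef
  set W := unifNorm (fun t => ω.eval t) with hWdef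
  -- a uniform bound for Q̂ on the unit ball, via Lagrange interpolation
  set S : ℝ := ∑ k : Fin (n - m), (ω.eval (x'' k)) ^ 2 with hSdef
  set v : Fin (p + 1) → ℝ := fun j => x'' (Fin.castLE hnm j) with hvdef
  have hvinj : Function.Injective v := hx''inj.comp (Fin.castLE_injective hnm)
  set K : ℝ := ∑ j : Fin (p + 1),
      (1 + Real.sqrt (S / (ω.eval (v j)) ^ 2)) *
        unifNorm (fun t => (Lagrange.basis Finset.univ v j).eval t) with hKdef
  have hKbound : ∀ φ : ℝ → ℝ, ContinuousOn φ (Set.Icc (-1:ℝ) 1) → unifNorm φ ≤ 1 →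
      unifNorm (fun t => (Qhat φ).eval t) ≤ K := by
    intro φ hφc hφ1
    obtain ⟨hdeg, hmin⟩ := hQhat φ hφc
    have hS : ∑ k : Fin (n - m), (ω.eval (x'' k)) ^ 2 * (φ (x'' k) - (Qhat φ).eval (x'' k)) ^ 2
        ≤ S := by
      refine le_trans (hmin 0 (by simp)) ?_
      rw [hSdef]
      refine Finset.sum_le_sum fun k _ => ?_
      have hφk : |φ (x'' k)| ≤ 1 := le_trans (le_unifNorm hφc (hx''mem k)) hφ1
      have hsq : (φ (x'' k)) ^ 2 ≤ 1 := by
        have := sq_abs (φ (x'' k))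
        nlinarith [abs_nonneg (φ (x'' k))]
      have := mul_le_mul_of_nonneg_left hsq (hw k).le
      simpa using this
    have hnode : ∀ j : Fin (p + 1),
        |(Qhat φ).eval (v j)| ≤ 1 + Real.sqrt (S / (ω.eval (v j)) ^ 2) := by
      intro j
      set k := Fin.castLE hnm j with hkdef
      have hsingle : (ω.eval (x'' k)) ^ 2 * (φ (x'' k) - (Qhat φ).eval (x'' k)) ^ 2 ≤ S := by
        refine le_trans ?_ hS
        exact Finset.single_le_sum
          (f := fun i => (ω.eval (x'' i)) ^ 2 * (φ (x'' i) - (Qhat φ).eval (x'' i)) ^ 2)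
          (fun i _ => mul_nonneg (hw i).le (sq_nonneg _)) (Finset.mem_univ k)
      have hdivle : (φ (x'' k) - (Qhat φ).eval (x'' k)) ^ 2 ≤ S / (ω.eval (x'' k)) ^ 2 := by
        rw [le_div_iff₀ (hw k)]
        calc (φ (x'' k) - (Qhat φ).eval (x'' k)) ^ 2 * (ω.eval (x'' k)) ^ 2
            = (ω.eval (x'' k)) ^ 2 * (φ (x'' k) - (Qhat φ).eval (x'' k)) ^ 2 := by ring
          _ ≤ S := hsingle
      have habs : |φ (x'' k) - (Qhat φ).eval (x'' k)| ≤ Real.sqrt (S / (ω.eval (x'' k)) ^ 2) :=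
        Real.abs_le_sqrt hdivle
      have hφk : |φ (x'' k)| ≤ 1 := le_trans (le_unifNorm hφc (hx''mem k)) hφ1
      have : |(Qhat φ).eval (x'' k)|
          ≤ |φ (x'' k)| + |φ (x'' k) - (Qhat φ).eval (x'' k)| := by
        have h8 := abs_sub (φ (x'' k)) (φ (x'' k) - (Qhat φ).eval (x'' k))
        rwa [sub_sub_cancel] at h8
      have hv' : v j = x'' k := rfl
      rw [hv']
      linarith
    have hdeg' : (Qhat φ).degree < (Finset.univ : Finset (Fin (p + 1))).card := by
      rw [Finset.card_univ, Fintype.card_fin]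
      refine lt_of_le_of_lt hdeg ?_
      exact_mod_cast Nat.lt_succ_self p
    have hrep := Lagrange.eq_interpolate (v := v) hvinj.injOn hdeg'
    refine unifNorm_le ?_ ?_
    · rw [hKdef]
      refine Finset.sum_nonneg fun j _ => mul_nonneg ?_ (unifNorm_nonneg' _)
      positivity
    · intro t ht
      have heval : (Qhat φ).eval t = ∑ j : Fin (p + 1),
          ((Qhat φ).eval (v j)) * (Lagrange.basis Finset.univ v j).eval t := by
        conv_lhs => rw [hrep]
        rw [Lagrange.interpolate_apply, Polynomial.eval_finset_sum]
        refine Finset.sum_congr rfl fun j _ => ?_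
        simp
      rw [heval, hKdef]
      refine le_trans (Finset.abs_sum_le_sum_abs _ _) (Finset.sum_le_sum fun j _ => ?_)
      rw [abs_mul]
      refine mul_le_mul (hnode j)
        (le_unifNorm (Lagrange.basis Finset.univ v j).continuousOn ht) (abs_nonneg _) ?_
      positivity
  have hbdd : BddAbove {a : ℝ | ∃ φ : ℝ → ℝ, ContinuousOn φ (Set.Icc (-1 : ℝ) 1) ∧
      unifNorm φ = 1 ∧ a = unifNorm fun t => (Qhat φ).eval t} := by
    refine ⟨K, ?_⟩
    rintro a ⟨φ, hc, hn, rfl⟩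
    exact hKbound φ hc hn.le
  have hN0 : 0 ≤ N :=
    Real.sSup_nonneg (by rintro a ⟨φ, _, _, rfl⟩; exact unifNorm_nonneg' _)
  -- the key operator norm bound
  have hproj : ∀ ψ : ℝ → ℝ, ContinuousOn ψ (Set.Icc (-1:ℝ) 1) →
      unifNorm (fun t => (Qhat ψ).eval t) ≤ N * unifNorm ψ := by
    intro ψ hψ
    obtain ⟨hdegψ, hminψ⟩ := hQhat ψ hψ
    rcases eq_or_lt_of_le (unifNorm_nonneg' ψ) with hc0 | hc0
    · -- degenerate case: ψ vanishes on [−1,1]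
      have hzero : ∀ t ∈ Set.Icc (-1:ℝ) 1, ψ t = 0 := fun t ht =>
        abs_eq_zero.mp (le_antisymm (hc0 ▸ le_unifNorm hψ ht) (abs_nonneg _))
      have hF0 : ∑ k : Fin (n - m),
          (ω.eval (x'' k)) ^ 2 * (ψ (x'' k) - (Qhat ψ).eval (x'' k)) ^ 2 ≤ 0 := by
        refine le_trans (hminψ 0 (by simp)) (le_of_eq ?_)
        refine Finset.sum_eq_zero fun k _ => ?_
        rw [hzero (x'' k) (hx''mem k)]
        simp
      have hnn : ∀ k ∈ Finset.univ, (0:ℝ) ≤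
          (ω.eval (x'' k)) ^ 2 * (ψ (x'' k) - (Qhat ψ).eval (x'' k)) ^ 2 :=
        fun k _ => mul_nonneg (hw k).le (sq_nonneg _)
      have hterm := (Finset.sum_eq_zero_iff_of_nonneg hnn).1
        (le_antisymm hF0 (Finset.sum_nonneg hnn))
      have hP0 : Qhat ψ = 0 := by
        refine poly_eq_of_eval_eq hnm x'' hx''inj hdegψ (by simp) fun k => ?_
        have hk := hterm k (Finset.mem_univ k)
        rcases mul_eq_zero.1 hk with h | h
        · exact absurd h (hw k).ne'
        · have := sub_eq_zero.mp (sq_eq_zero_iff.mp h)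
          rw [hzero (x'' k) (hx''mem k)] at this
          simp [← this]
      rw [hP0, ← hc0, mul_zero]
      exact le_of_eq (le_antisymm (unifNorm_le le_rfl (by intro t ht; simp))
        (unifNorm_nonneg' _))
    · set c := unifNorm ψ with hcdef
      set φ : ℝ → ℝ := fun t => c⁻¹ * ψ t with hφdef
      have hφc : ContinuousOn φ (Set.Icc (-1:ℝ) 1) := continuousOn_const.mul hψ
      have hφ1 : unifNorm φ = 1 := by
        rw [hφdef, unifNorm_const_mul hψ, abs_of_pos (inv_pos.2 hc0), inv_mul_cancel₀ hc0.ne']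
      obtain ⟨hdegφ, hminφ⟩ := hQhat φ hφc
      have hcc : c⁻¹ * c = 1 := inv_mul_cancel₀ hc0.ne'
      have hscale : Qhat φ = c⁻¹ • Qhat ψ := by
        refine minimizer_unique hnm x'' hx''inj (fun k => (ω.eval (x'' k)) ^ 2) hw
          (fun k => φ (x'' k)) hdegφ (le_trans (Polynomial.degree_smul_le _ _) hdegψ)
          hminφ ?_
        intro R hR
        have hdegcR : (c • R).degree ≤ (p:ℕ) := le_trans (Polynomial.degree_smul_le _ _) hR
        have h := hminψ (c • R) hdegcR
        calc ∑ k : Fin (n - m), (ω.eval (x'' k)) ^ 2 *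
              (φ (x'' k) - (c⁻¹ • Qhat ψ).eval (x'' k)) ^ 2
            = (c⁻¹)^2 * ∑ k : Fin (n - m), (ω.eval (x'' k)) ^ 2 *
                (ψ (x'' k) - (Qhat ψ).eval (x'' k)) ^ 2 := by
              rw [Finset.mul_sum]
              refine Finset.sum_congr rfl fun k _ => ?_
              simp only [hφdef, Polynomial.eval_smul, smul_eq_mul]
              ring
          _ ≤ (c⁻¹)^2 * ∑ k : Fin (n - m), (ω.eval (x'' k)) ^ 2 *
                (ψ (x'' k) - (c • R).eval (x'' k)) ^ 2 :=
              mul_le_mul_of_nonneg_left h (by positivity)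
          _ = ∑ k : Fin (n - m), (ω.eval (x'' k)) ^ 2 * (φ (x'' k) - R.eval (x'' k)) ^ 2 := by
              rw [Finset.mul_sum]
              refine Finset.sum_congr rfl fun k _ => ?_
              have hcR : (c • R).eval (x'' k) = c * R.eval (x'' k) := by
                simp [Polynomial.eval_smul, smul_eq_mul]
              rw [hcR]
              calc (c⁻¹)^2 * ((ω.eval (x'' k)) ^ 2 * (ψ (x'' k) - c * R.eval (x'' k)) ^ 2)
                  = (ω.eval (x'' k)) ^ 2 *
                      (c⁻¹ * ψ (x'' k) - (c⁻¹ * c) * R.eval (x'' k)) ^ 2 := by ring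
                _ = (ω.eval (x'' k)) ^ 2 * (φ (x'' k) - R.eval (x'' k)) ^ 2 := by
                    rw [hcc, one_mul]
      have ha : unifNorm (fun t => (Qhat φ).eval t) ≤ N :=
        le_csSup hbdd ⟨φ, hφc, hφ1, rfl⟩
      have heq : unifNorm (fun t => (Qhat φ).eval t)
          = c⁻¹ * unifNorm (fun t => (Qhat ψ).eval t) := by
        have hfun : (fun t => (Qhat φ).eval t) = fun t => c⁻¹ * (Qhat ψ).eval t := by
          funext t
          rw [hscale]
          simp [Polynomial.eval_smul, smul_eq_mul]
        rw [hfun, unifNorm_const_mul (Qhat ψ).continuousOn, abs_of_pos (inv_pos.2 hc0)]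
      rw [heq] at ha
      have hmul := mul_le_mul_of_nonneg_left ha hc0.le
      rw [← mul_assoc, mul_inv_cancel₀ hc0.ne', one_mul] at hmul
      calc unifNorm (fun t => (Qhat ψ).eval t) ≤ c * N := hmul
        _ = N * c := mul_comm _ _
  -- translation property
  have htrans : ∀ Q : Polynomial ℝ, Q.degree ≤ (p:ℕ) →
      Qhat (fun t => fhat t - Q.eval t) = Qhat fhat - Q := by
    intro Q hQ
    set ψ : ℝ → ℝ := fun t => fhat t - Q.eval t with hψdef
    have hψc : ContinuousOn ψ (Set.Icc (-1:ℝ) 1) := hfhatcont.sub Q.continuousOn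
    obtain ⟨hd1, hm1⟩ := hQhat ψ hψc
    obtain ⟨hd2, hm2⟩ := hQhat fhat hfhatcont
    refine minimizer_unique hnm x'' hx''inj (fun k => (ω.eval (x'' k)) ^ 2) hw
      (fun k => ψ (x'' k)) hd1
      (le_trans (Polynomial.degree_sub_le _ _) (max_le hd2 hQ)) hm1 ?_
    intro R hR
    have h := hm2 (R + Q) (le_trans (Polynomial.degree_add_le _ _) (max_le hR hQ))
    calc ∑ k : Fin (n - m), (ω.eval (x'' k)) ^ 2 *
          (ψ (x'' k) - (Qhat fhat - Q).eval (x'' k)) ^ 2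
        = ∑ k : Fin (n - m), (ω.eval (x'' k)) ^ 2 *
            (fhat (x'' k) - (Qhat fhat).eval (x'' k)) ^ 2 := by
          refine Finset.sum_congr rfl fun k _ => ?_
          simp only [hψdef, Polynomial.eval_sub]
          ring
      _ ≤ ∑ k : Fin (n - m), (ω.eval (x'' k)) ^ 2 *
            (fhat (x'' k) - (R + Q).eval (x'' k)) ^ 2 := h
      _ = ∑ k : Fin (n - m), (ω.eval (x'' k)) ^ 2 * (ψ (x'' k) - R.eval (x'' k)) ^ 2 := by
          refine Finset.sum_congr rfl fun k _ => ?_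
          simp only [hψdef, Polynomial.eval_add]
          ring
  -- the main estimate for an arbitrary competitor Q
  have hmain : ∀ Q : Polynomial ℝ, Q.degree ≤ (p:ℕ) →
      unifNorm (fun t => f t - (PX' + Qhat fhat * ω).eval t)
        ≤ (1 + N) * W * unifNorm (fun t => fhat t - Q.eval t) := by
    intro Q hQ
    set e := unifNorm (fun t => fhat t - Q.eval t) with he
    have he0 : 0 ≤ e := unifNorm_nonneg' _
    have hW0 : 0 ≤ W := unifNorm_nonneg' _
    have hψc : ContinuousOn (fun t => fhat t - Q.eval t) (Set.Icc (-1:ℝ) 1) :=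
      hfhatcont.sub Q.continuousOn
    have hQQ : unifNorm (fun t => ((Qhat fhat) - Q).eval t) ≤ N * e := by
      rw [← htrans Q hQ]
      exact hproj _ hψc
    refine unifNorm_le (by positivity) ?_
    intro t ht
    have h1 : f t - (PX' + Qhat fhat * ω).eval t
        = (fhat t - (Qhat fhat).eval t) * ω.eval t := by
      have h2 := hfhat t ht
      simp only [Polynomial.eval_add, Polynomial.eval_mul]
      linarith [h2, mul_comm (fhat t) (ω.eval t)]
    rw [h1, abs_mul]
    have hb1 : |fhat t - (Qhat fhat).eval t| ≤ e + N * e := by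
      have h3 : fhat t - (Qhat fhat).eval t
          = (fhat t - Q.eval t) - ((Qhat fhat).eval t - Q.eval t) := by ring
      have h4 : |fhat t - (Qhat fhat).eval t|
          ≤ |fhat t - Q.eval t| + |(Qhat fhat).eval t - Q.eval t| := by
        rw [h3]; exact abs_sub _ _
      have h5 : |fhat t - Q.eval t| ≤ e := le_unifNorm hψc ht
      have h6 : |(Qhat fhat).eval t - Q.eval t| ≤ N * e := by
        have h7 : |((Qhat fhat) - Q).eval t|
            ≤ unifNorm (fun s => ((Qhat fhat) - Q).eval s) :=
          le_unifNorm (Qhat fhat - Q).continuousOn ht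
        rw [Polynomial.eval_sub] at h7
        exact le_trans h7 hQQ
      linarith
    have hb2 : |ω.eval t| ≤ W := le_unifNorm hωcont ht
    calc |fhat t - (Qhat fhat).eval t| * |ω.eval t| ≤ (e + N * e) * W :=
        mul_le_mul hb1 hb2 (abs_nonneg _) (by positivity)
      _ = (1 + N) * W * e := by ring
  -- W > 0
  have hWpos : 0 < W := by
    have hk0 : (0:ℕ) < n - m := by omega
    set k0 : Fin (n - m) := ⟨0, hk0⟩
    have hle := le_unifNorm hωcont (hx''mem k0)
    have habs : 0 < |ω.eval (x'' k0)| := abs_pos.2 (hωne k0)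
    linarith
  have hpos : 0 < (1 + N) * W := mul_pos (by linarith) hWpos
  have hEset : {e : ℝ | ∃ Q : Polynomial ℝ, Q.degree ≤ (p : ℕ) ∧
      e = unifNorm fun t => fhat t - Q.eval t}.Nonempty :=
    ⟨unifNorm fun t => fhat t - (0 : Polynomial ℝ).eval t, 0, by simp, rfl⟩
  have hinf : unifNorm (fun t => f t - (PX' + Qhat fhat * ω).eval t) / ((1 + N) * W)
      ≤ Ep p fhat := by
    refine le_csInf hEset ?_
    rintro e ⟨Q, hQ, rfl⟩
    rw [div_le_iff₀ hpos]
    calc unifNorm (fun t => f t - (PX' + Qhat fhat * ω).eval t)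
        ≤ (1 + N) * W * unifNorm (fun t => fhat t - Q.eval t) := hmain Q hQ
      _ = (unifNorm fun t => fhat t - Q.eval t) * ((1 + N) * W) := by ring
  have hfinal := (div_le_iff₀ hpos).mp hinf
  calc unifNorm (fun t => f t - (PX' + Qhat fhat * ω).eval t)
      ≤ Ep p fhat * ((1 + N) * W) := hfinal
    _ = (1 + N) * Ep p fhat * W := by ring
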